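/- arXiv:2310.02390 — 6 statements merged into one kernel-verified Lean document; each statement's English description precedes it below -/
import Mathlib

section
/- For all β > 1, f(0) > 0, v > 0, the shared-sequencer equilibrium cost (f(0)·v/β)^{β/(β−1)} is greater than or equal to the two-sequencer total equilibrium cost 2·(f(0)·v/(2β))^{β/(β−1)}. Equivalently, 1 ≥ 2^{−1/(β−1)} implies the inequality, and it holds strictly for β > 1. -/
open Real

/-- The shared-sequencer equilibrium cost (f(0)·v/β)^(β/(β−1)) is at least the
two-sequencer total cost 2·(f(0)·v/(2β))^(β/(β−1)); moreover 1 ≥ 2^(−1/(β−1)) implies the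
inequality, and it holds strictly for β > 1. -/
theorem stmt_3 (β f0 v : ℝ) (hβ : 1 < β) (hf0 : 0 < f0) (hv : 0 < v) :
    ((1 : ℝ) ≥ (2 : ℝ) ^ (-(1 / (β - 1))) →
      (f0 * v / β) ^ (β / (β - 1)) ≥ 2 * (f0 * v / (2 * β)) ^ (β / (β - 1))) ∧
    (f0 * v / β) ^ (β / (β - 1)) > 2 * (f0 * v / (2 * β)) ^ (β / (β - 1)) := by
  have hβ0 : (0:ℝ) < β := lt_trans one_pos hβ
  have hA : 0 < f0 * v / β := by positivity
  set p := β / (β - 1) with hp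
  have hp1 : 1 < p := by
    rw [hp, lt_div_iff₀ (by linarith)]; linarith
  have key : f0 * v / (2 * β) = (f0 * v / β) / 2 := by ring
  have h1 : (f0 * v / (2*β)) ^ p = (f0*v/β)^p * (2:ℝ)^(-p) := by
    rw [key, div_rpow hA.le (by norm_num), rpow_neg (by norm_num), div_eq_mul_inv]
  have h2 : 2 * (f0*v/(2*β))^p = (2:ℝ)^(1-p) * (f0*v/β)^p := by
    rw [h1, rpow_sub (by norm_num), rpow_one, rpow_neg (by norm_num : (0:ℝ) ≤ 2)]; ring
  have h3 : (2:ℝ)^(1-p) < 1 :=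
    rpow_lt_one_of_one_lt_of_neg (by norm_num) (by linarith)
  have hpos : 0 < (f0*v/β)^p := rpow_pos_of_pos hA p
  have hstrict : (f0*v/β)^p > 2 * (f0*v/(2*β))^p := by
    rw [h2]; nlinarith
  exact ⟨fun _ => hstrict.le, hstrict⟩
end

section
/- Let c, g, v > 0 and f(0) > 0 with v > c/(g·f(0)). For s* = g − √(c·g/(f(0)·v)) we have s* ∈ (0, g) and C(s*) = c·s*/(g−s*) = √(c·g·f(0)·v) − c. -/
open Real

/-! Write `r = √(c g / (f₀ v))`. Then `g - s* = r`, so `C(s*) = c g / r - c`; the condition on `v`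
is exactly `r < g`, and `c g / r = √(c g f₀ v)` since `r² = c g / (f₀ v)`. -/

theorem mul_sub_div_sub_sub_cancel {α : Type*} [Field α] (c g r : α) (hr : r ≠ 0) :
    c * (g - r) / (g - (g - r)) = c * g / r - c := by
  rw [sub_sub_cancel]
  field_simp

theorem Real.div_sqrt_div {x : ℝ} (hx : 0 ≤ x) (y : ℝ) : x / √(x / y) = √(x * y) := by
  rcases le_or_gt y 0 with hy | hy
  · rw [Real.sqrt_eq_zero'.2 (div_nonpos_of_nonneg_of_nonpos hx hy),
      Real.sqrt_eq_zero'.2 (mul_nonpos_of_nonneg_of_nonpos hx hy), div_zero]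
  · rw [Real.sqrt_div' x hy.le, div_div_eq_mul_div, mul_div_right_comm, Real.div_sqrt,
      Real.sqrt_mul hx]

theorem stmt_6_general (c g v f0 : ℝ) (hc : 0 < c) (hg : 0 < g) (hf0 : 0 < f0)
    (hint : v > c / (g * f0)) :
    0 < g - Real.sqrt (c * g / (f0 * v)) ∧ g - Real.sqrt (c * g / (f0 * v)) < g ∧
    c * (g - Real.sqrt (c * g / (f0 * v))) / (g - (g - Real.sqrt (c * g / (f0 * v)))) =
      Real.sqrt (c * g * f0 * v) - c := by
  have hgf : 0 < g * f0 := mul_pos hg hf0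
  have hv : 0 < v := (div_pos hc hgf).trans hint
  have hfv : 0 < f0 * v := mul_pos hf0 hv
  have hr : 0 < √(c * g / (f0 * v)) := Real.sqrt_pos.2 (by positivity)
  have hrg : √(c * g / (f0 * v)) < g := by
    rw [gt_iff_lt, div_lt_iff₀ hgf] at hint
    rw [Real.sqrt_lt' hg, div_lt_iff₀ hfv]
    nlinarith
  refine ⟨sub_pos.2 hrg, sub_lt_self g hr, ?_⟩
  rw [mul_sub_div_sub_sub_cancel _ _ _ hr.ne', Real.div_sqrt_div (by positivity), ← mul_assoc]

/-- TimeBoost, one shared sequencer. For v > c/(g·f(0)) and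
s* = g − √(c·g/(f(0)·v)), we have s* ∈ (0, g) and C(s*) = c·s*/(g−s*) = √(c·g·f(0)·v) − c. -/
theorem stmt_6 (c g v f0 : ℝ) (hc : 0 < c) (hg : 0 < g) (hv : 0 < v) (hf0 : 0 < f0)
    (hint : v > c / (g * f0)) :
    0 < g - Real.sqrt (c * g / (f0 * v)) ∧ g - Real.sqrt (c * g / (f0 * v)) < g ∧
    c * (g - Real.sqrt (c * g / (f0 * v))) / (g - (g - Real.sqrt (c * g / (f0 * v)))) =
      Real.sqrt (c * g * f0 * v) - c :=
  stmt_6_general c g v f0 hc hg hf0 hint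
end

section
/- Let c, g, v > 0 and f(0) > 0 with v > 2c/(g·f(0)). For s* = g − √(2·c·g/(f(0)·v)) we have s* ∈ (0, g) and the total cost across both sequencers equals 2·C(s*) = √(2·c·g·f(0)·v) − 2c. -/
open Real

/- Write `r = √(2cg/(f(0)v))`, so `s* = g - r`. The threshold on `v` says exactly `r² < g²`, which
places `s*` in `(0, g)`, and the total cost is `2c(g - r)/r = 2cg/r - 2c` with
`2cg/r = √(2cg · f(0)v)`. -/

lemma div_sqrt_div_eq_sqrt_mul {a : ℝ} (ha : 0 ≤ a) (b : ℝ) : a / √(a / b) = √(a * b) := by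
  rw [sqrt_div ha, div_div_eq_mul_div, mul_div_right_comm, div_sqrt, sqrt_mul ha]

lemma cost_at_sub (c g r : ℝ) (hr : r ≠ 0) : c * (g - r) / (g - (g - r)) = c * g / r - c := by
  rw [sub_sub_cancel]
  field_simp

theorem stmt_7_general (c g v f0 : ℝ) (hc : 0 < c) (hg : 0 < g) (hf0 : 0 < f0)
    (hint : v > 2 * c / (g * f0)) :
    0 < g - Real.sqrt (2 * c * g / (f0 * v)) ∧ g - Real.sqrt (2 * c * g / (f0 * v)) < g ∧
    2 * (c * (g - Real.sqrt (2 * c * g / (f0 * v))) /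
        (g - (g - Real.sqrt (2 * c * g / (f0 * v))))) =
      Real.sqrt (2 * c * g * f0 * v) - 2 * c := by
  have hv : 0 < v := lt_trans (by positivity) hint
  have hthreshold : 2 * c < g * (f0 * v) := by
    rw [gt_iff_lt, div_lt_iff₀ (by positivity)] at hint
    linarith
  set r := √(2 * c * g / (f0 * v))
  have hr : 0 < r := sqrt_pos.2 (by positivity)
  have hrg : r < g := by
    rw [sqrt_lt' hg, div_lt_iff₀ (by positivity)]
    nlinarith
  refine ⟨sub_pos.2 hrg, sub_lt_self g hr, ?_⟩
  calc 2 * (c * (g - r) / (g - (g - r))) = 2 * c * g / r - 2 * c := by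
        rw [cost_at_sub c g r hr.ne']
        ring
    _ = √(2 * c * g * (f0 * v)) - 2 * c := by rw [div_sqrt_div_eq_sqrt_mul (by positivity)]
    _ = √(2 * c * g * f0 * v) - 2 * c := by simp only [mul_assoc]

/-- TimeBoost, two separate sequencers. For v > 2c/(g·f(0)) and
s* = g − √(2·c·g/(f(0)·v)), we have s* ∈ (0, g) and the total cost across both sequencers is
2·C(s*) = 2·c·s*/(g−s*) = √(2·c·g·f(0)·v) − 2c. -/
theorem stmt_7 (c g v f0 : ℝ) (hc : 0 < c) (hg : 0 < g) (hv : 0 < v) (hf0 : 0 < f0)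
    (hint : v > 2 * c / (g * f0)) :
    0 < g - Real.sqrt (2 * c * g / (f0 * v)) ∧ g - Real.sqrt (2 * c * g / (f0 * v)) < g ∧
    2 * (c * (g - Real.sqrt (2 * c * g / (f0 * v))) /
        (g - (g - Real.sqrt (2 * c * g / (f0 * v))))) =
      Real.sqrt (2 * c * g * f0 * v) - 2 * c :=
  stmt_7_general c g v f0 hc hg hf0 hint
end

section
/- Let c, g, v, σ > 0 and set f(0) = 1/(√(2π)·σ). Then √(2·c·g·f(0)·v) − 2c ≥ √(c·g·f(0)·v) − c if and only if (√2 − 1)²·v/(√(2π)·σ) ≥ c/g. Numerically (√2−1)²/√(2π) ≈ 0.068447. -/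
open Real

/-- With f(0) = 1/(√(2π)·σ), the two-sequencer TimeBoost revenue exceeds the
shared-sequencer revenue, √(2·c·g·f(0)·v) − 2c ≥ √(c·g·f(0)·v) − c, if and only if
(√2 − 1)²·v/(√(2π)·σ) ≥ c/g. -/
theorem stmt_8 (c g v σ : ℝ) (hc : 0 < c) (hg : 0 < g) (hv : 0 < v) (hσ : 0 < σ) :
    Real.sqrt (2 * c * g * (1 / (Real.sqrt (2 * π) * σ)) * v) - 2 * c ≥
      Real.sqrt (c * g * (1 / (Real.sqrt (2 * π) * σ)) * v) - c ↔
    (Real.sqrt 2 - 1) ^ 2 * v / (Real.sqrt (2 * π) * σ) ≥ c / g := by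
  have hs : 0 < Real.sqrt (2 * π) * σ := by
    have : 0 < Real.sqrt (2 * π) := Real.sqrt_pos.mpr (by positivity)
    positivity
  set s := Real.sqrt (2 * π) * σ with hsdef
  have hA : 0 < c * g * (1 / s) * v := by positivity
  set r := Real.sqrt (c * g * (1 / s) * v) with hrdef
  have hr : 0 ≤ r := Real.sqrt_nonneg _
  have hr2 : r ^ 2 = c * g * (1 / s) * v := Real.sq_sqrt hA.le
  have h2 : Real.sqrt (2 * c * g * (1 / s) * v) = Real.sqrt 2 * r := by
    rw [hrdef, ← Real.sqrt_mul (by norm_num : (0:ℝ) ≤ 2)]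
    ring_nf
  have hs2 : (1:ℝ) ≤ Real.sqrt 2 := by
    nlinarith [Real.sq_sqrt (by norm_num : (0:ℝ) ≤ 2), Real.sqrt_nonneg 2]
  have hinv : s * (1 / s) = 1 := mul_one_div_cancel hs.ne'
  rw [h2]
  have step1 : Real.sqrt 2 * r - 2 * c ≥ r - c ↔ c ≤ (Real.sqrt 2 - 1) * r := by
    constructor <;> intro h <;> nlinarith
  have step2 : c ≤ (Real.sqrt 2 - 1) * r ↔ c ^ 2 ≤ (Real.sqrt 2 - 1) ^ 2 * r ^ 2 := by
    constructor
    · intro h; nlinarith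
    · intro h
      nlinarith [mul_nonneg (by linarith : (0:ℝ) ≤ Real.sqrt 2 - 1) hr]
  have step3 : c ^ 2 ≤ (Real.sqrt 2 - 1) ^ 2 * (c * g * (1 / s) * v) ↔
      c / g ≤ (Real.sqrt 2 - 1) ^ 2 * v / s := by
    have e : (Real.sqrt 2 - 1) ^ 2 * (c * g * (1 / s) * v)
        = ((Real.sqrt 2 - 1) ^ 2 * (c * g * v)) / s := by
      field_simp
    rw [e, le_div_iff₀ hs, div_le_div_iff₀ hg hs]
    constructor <;> intro h <;> nlinarith [hc, hs, sq_nonneg (Real.sqrt 2 - 1)]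
  rw [step1, step2, hr2, step3]
end

section
/- For any a > 0 and any c > 0: √(2ac) − 2c ≥ √(ac) − c if and only if c ≤ (√2 − 1)²·a, where a = g·f(0)·v. -/
open Real

/-- Abstract TimeBoost revenue comparison: for a, c > 0,
√(2ac) − 2c ≥ √(ac) − c if and only if c ≤ (√2 − 1)^2·a. -/
theorem stmt_9 (a c : ℝ) (ha : 0 < a) (hc : 0 < c) :
    Real.sqrt (2 * a * c) - 2 * c ≥ Real.sqrt (a * c) - c ↔
      c ≤ (Real.sqrt 2 - 1) ^ 2 * a := by
  have h2 : Real.sqrt (2 * a * c) = Real.sqrt 2 * Real.sqrt (a * c) := by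
    rw [mul_assoc, Real.sqrt_mul (by norm_num)]
  have hs0 : 0 ≤ Real.sqrt (a * c) := Real.sqrt_nonneg _
  have hs : Real.sqrt (a * c) ^ 2 = a * c := Real.sq_sqrt (by positivity)
  have hsq2 : Real.sqrt 2 ^ 2 = 2 := Real.sq_sqrt (by norm_num)
  have h21 : (1:ℝ) < Real.sqrt 2 := by nlinarith [Real.sqrt_nonneg 2]
  rw [h2]
  constructor
  · intro h
    have key : c ≤ (Real.sqrt 2 - 1) * Real.sqrt (a * c) := by linarith
    have := mul_self_le_mul_self hc.le key
    nlinarith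
  · intro h
    have key : c ≤ (Real.sqrt 2 - 1) * Real.sqrt (a * c) := by
      nlinarith [sq_nonneg ((Real.sqrt 2 - 1) * Real.sqrt (a * c) - c),
        sq_nonneg ((Real.sqrt 2 - 1) * Real.sqrt (a * c) + c),
        mul_nonneg (le_of_lt (by linarith : (0:ℝ) < Real.sqrt 2 - 1)) hs0]
    linarith
end

section
/- For β > 1, f(0) > 0, v > 0 such that both interior equilibria exist, the per-trader revenue under a shared sequencer with uncapped constant-elasticity bidding, (f(0)·v/β)^{β/(β−1)}, is strictly greater than the per-trader two-sequencer revenue 2·(f(0)·v/(2β))^{β/(β−1)}; indeed the ratio of the former to the latter equals 2^{1/(β−1)} > 1. -/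
open Real

/-- With uncapped constant-elasticity bidding, the shared-sequencer per-trader
revenue (f(0)·v/β)^(β/(β−1)) strictly exceeds the two-sequencer per-trader revenue
2·(f(0)·v/(2β))^(β/(β−1)) for β > 1 (never equal), since the ratio is 2^(1/(β−1)) > 1. -/
theorem stmt_19 (β f0 v : ℝ) (hβ : 1 < β) (hf0 : 0 < f0) (hv : 0 < v) :
    (f0 * v / β) ^ (β / (β - 1)) > 2 * (f0 * v / (2 * β)) ^ (β / (β - 1)) ∧
    (f0 * v / β) ^ (β / (β - 1)) / (2 * (f0 * v / (2 * β)) ^ (β / (β - 1))) =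
      (2 : ℝ) ^ (1 / (β - 1)) ∧
    (1 : ℝ) < (2 : ℝ) ^ (1 / (β - 1)) := by
  have hb1 : 0 < β - 1 := by linarith
  have hβ0 : 0 < β := by linarith
  have hx : 0 < f0 * v / β := by positivity
  set e := β / (β - 1) with he
  have hsplit : (f0 * v / (2 * β)) ^ e = (f0 * v / β) ^ e / 2 ^ e := by
    rw [show f0 * v / (2 * β) = (f0 * v / β) / 2 by ring,
      div_rpow hx.le (by norm_num)]
  have he1 : (1 : ℝ) < e := by
    rw [he, lt_div_iff₀ hb1]; linarith
  have h2e : (2 : ℝ) < 2 ^ e := by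
    calc (2 : ℝ) = 2 ^ (1 : ℝ) := (rpow_one 2).symm
      _ < 2 ^ e := by
        exact rpow_lt_rpow_left_iff (by norm_num) |>.mpr he1
  have hxe : 0 < (f0 * v / β) ^ e := rpow_pos_of_pos hx e
  have h2e0 : 0 < (2 : ℝ) ^ e := rpow_pos_of_pos (by norm_num) e
  have hsub : (2 : ℝ) ^ e / 2 = 2 ^ (1 / (β - 1)) := by
    have h1 : 1 / (β - 1) = e - 1 := by rw [he]; field_simp; ring
    rw [h1, rpow_sub (by norm_num : (0:ℝ) < 2), rpow_one]
  refine ⟨?_, ?_, ?_⟩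
  · rw [hsplit]
    rw [gt_iff_lt, mul_div_assoc', div_lt_iff₀ h2e0]
    nlinarith [mul_lt_mul_of_pos_left h2e hxe]
  · rw [hsplit, ← hsub]
    field_simp
  · exact one_lt_rpow_iff_of_pos (by norm_num) |>.mpr (Or.inl ⟨by norm_num, by positivity⟩)
end
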